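/- Exactly one of the following systems is consistent: (1) there exists X ≻ 0 with A(X) = b; (2) there exists y ∈ R^m with A*(y) ⪰ 0, A*(y) ≠ 0, and b^T y = 0. -/

import Mathlib

/-!
If `X ≻ 0` and `M = ∑ yᵢ Sᵢ ⪰ 0` with `bᵀy = 0`, then `tr (M X) = bᵀy = 0`, which forces `M = 0`.
Conversely, if no positive definite `X` is feasible, the open convex cone of matrices with positive
definite quadratic form misses the affine space `{X | tr (Sᵢ X) = bᵢ}`. A separating functional is
bounded below on that affine space, so it vanishes on its direction and equals `X ↦ -tr (M X)` for
some `M = ∑ yᵢ Sᵢ`. It is `≤ 0` on PSD matrices (the closure of the cone), giving `M ⪰ 0`; it is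
negative at `1`, giving `M ≠ 0`; and it vanishes at a PSD feasible point, giving `bᵀy = 0`.
-/

open Matrix
open scoped ComplexOrder

theorem ConvexCone.le_zero_of_forall_lt {E : Type*} [AddCommMonoid E] [Module ℝ E]
    (C : ConvexCone ℝ E) (f : E →ₗ[ℝ] ℝ) {u : ℝ} (h : ∀ x ∈ C, f x < u) {x : E} (hx : x ∈ C) :
    f x ≤ 0 := by
  by_contra! hfx
  have := h (((|u| + 1) / f x) • x) (C.smul_mem (by positivity) hx)
  rw [map_smul, smul_eq_mul, div_mul_cancel₀ _ hfx.ne'] at this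
  linarith [le_abs_self u]

theorem LinearMap.exists_eq_sum_smul_of_bddBelow_fiber {𝕜 ι E : Type*} [Field 𝕜] [LinearOrder 𝕜]
    [IsStrictOrderedRing 𝕜] [Fintype ι] [AddCommGroup E] [Module 𝕜 E] (L : ι → E →ₗ[𝕜] 𝕜)
    (f : E →ₗ[𝕜] 𝕜) (x₀ : E) {u : 𝕜} (h : ∀ x, (∀ i, L i x = L i x₀) → u ≤ f x) :
    ∃ c : ι → 𝕜, f = ∑ i, c i • L i := by
  have hker : ∀ v, (∀ i, L i v = 0) → f v = 0 := by
    intro v hv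
    by_contra hfv
    have := h (x₀ + ((u - f x₀ - 1) / f v) • v) (by simp [hv])
    rw [map_add, map_smul, smul_eq_mul, div_mul_cancel₀ _ hfv] at this
    linarith
  obtain ⟨c, hc⟩ := (Submodule.mem_span_range_iff_exists_fun 𝕜).1 <|
    mem_span_of_iInf_ker_le_ker fun v hv => hker v fun i => (Submodule.mem_iInf _).1 hv i
  exact ⟨c, hc.symm⟩

namespace Matrix

open scoped MatrixOrder in
theorem PosSemidef.eq_zero_of_trace_mul_posDef_eq_zero {n 𝕜 : Type*} [Fintype n] [DecidableEq n]
    [RCLike 𝕜] {M X : Matrix n n 𝕜} (hM : M.PosSemidef) (hX : X.PosDef) (h : (M * X).trace = 0) :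
    M = 0 := by
  obtain ⟨C, rfl⟩ := CStarAlgebra.nonneg_iff_eq_star_mul_self.mp hX.posSemidef.nonneg
  have hC : IsUnit C := isUnit_of_mul_isUnit_right hX.isUnit
  have hCMC : C * M * Cᴴ = 0 := by
    rw [← (hM.mul_mul_conjTranspose_same C).trace_eq_zero_iff, trace_mul_cycle, trace_mul_comm]
    exact h
  rwa [Matrix.mul_assoc, hC.mul_right_eq_zero, ← star_eq_conjTranspose,
    hC.star.mul_left_eq_zero] at hCMC

variable {n ι : Type*} [Fintype n]

/-- Symmetry is not required, so that the cone is open in the space of all matrices;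
symmetrising a member gives a `PosDef` matrix. -/
def posDefQuadFormCone (n : Type*) [Fintype n] : ConvexCone ℝ (Matrix n n ℝ) where
  carrier := {X | ∀ x ≠ 0, 0 < x ⬝ᵥ X *ᵥ x}
  smul_mem' c hc X hX x hx := by
    rw [smul_mulVec, dotProduct_smul, smul_eq_mul]
    exact mul_pos hc (hX x hx)
  add_mem' X hX Y hY x hx := by
    rw [add_mulVec, dotProduct_add]
    exact add_pos (hX x hx) (hY x hx)

theorem mem_posDefQuadFormCone_iff_sphere {X : Matrix n n ℝ} :
    X ∈ posDefQuadFormCone n ↔ ∀ u ∈ Metric.sphere (0 : n → ℝ) 1, 0 < u ⬝ᵥ X *ᵥ u := by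
  refine ⟨fun h u hu => h u (ne_zero_of_mem_unit_sphere ⟨u, hu⟩), fun h x hx => ?_⟩
  have hnorm : 0 < ‖x‖ := norm_pos_iff.2 hx
  have := h (‖x‖⁻¹ • x) (by simp [norm_smul, hnorm.ne'])
  rw [mulVec_smul, dotProduct_smul, smul_dotProduct, smul_eq_mul, smul_eq_mul] at this
  exact pos_of_mul_pos_right (pos_of_mul_pos_right this (by positivity)) (by positivity)

theorem isOpen_posDefQuadFormCone : IsOpen (posDefQuadFormCone n : Set (Matrix n n ℝ)) := by
  have hq : Continuous fun p : Matrix n n ℝ × (n → ℝ) => p.2 ⬝ᵥ p.1 *ᵥ p.2 :=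
    continuous_snd.dotProduct (continuous_fst.matrix_mulVec continuous_snd)
  refine isOpen_iff_eventually.2 fun X hX => ?_
  simp only [SetLike.mem_coe, mem_posDefQuadFormCone_iff_sphere] at hX ⊢
  exact (isCompact_sphere 0 1).eventually_forall_of_forall_eventually fun u hu =>
    continuousAt_const.eventually_lt hq.continuousAt (hX u hu)

theorem PosDef.mem_posDefQuadFormCone {X : Matrix n n ℝ} (hX : X.PosDef) :
    X ∈ posDefQuadFormCone n :=
  fun x hx => by simpa using hX.dotProduct_mulVec_pos hx

theorem PosSemidef.mem_closure_posDefQuadFormCone [DecidableEq n] {X : Matrix n n ℝ}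
    (hX : X.PosSemidef) : X ∈ closure (posDefQuadFormCone n : Set (Matrix n n ℝ)) := by
  have hlim : Filter.Tendsto (fun ε : ℝ => X + ε • 1) (nhdsWithin 0 (Set.Ioi 0)) (nhds X) := by
    have := ((continuous_const.add (continuous_id.smul continuous_const)).tendsto (0 : ℝ)).mono_left
      (nhdsWithin_le_nhds (s := Set.Ioi 0)) (f := fun ε : ℝ => X + ε • (1 : Matrix n n ℝ))
    simpa using this
  exact mem_closure_of_tendsto hlim (eventually_nhdsWithin_of_forall fun ε hε =>
    (PosDef.posSemidef_add hX (PosDef.one.smul hε)).mem_posDefQuadFormCone)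

theorem posDef_of_mem_posDefQuadFormCone {X : Matrix n n ℝ} (hX : X ∈ posDefQuadFormCone n) :
    ((2⁻¹ : ℝ) • (X + Xᵀ)).PosDef := by
  refine posDef_iff_dotProduct_mulVec.2 ⟨?_, fun x hx => ?_⟩
  · simp [isHermitian_iff_isSymm, IsSymm, add_comm]
  · have hXt : x ⬝ᵥ Xᵀ *ᵥ x = x ⬝ᵥ X *ᵥ x := by
      rw [dotProduct_mulVec, vecMul_transpose, dotProduct_comm]
    rw [star_trivial, smul_mulVec, dotProduct_smul, add_mulVec, dotProduct_add, hXt, smul_eq_mul]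
    linarith [hX x hx]

theorem IsSymm.trace_mul_transpose {S : Matrix n n ℝ} (hS : S.IsSymm) (X : Matrix n n ℝ) :
    (S * Xᵀ).trace = (S * X).trace := by
  rw [← trace_transpose, transpose_mul, transpose_transpose, hS.eq, trace_mul_comm]

theorem trace_sum_smul_mul [Fintype ι] (y : ι → ℝ) (S : ι → Matrix n n ℝ) (X : Matrix n n ℝ) :
    ((∑ i, y i • S i) * X).trace = ∑ i, y i * (S i * X).trace := by
  simp [Finset.sum_mul, trace_sum, trace_smul]

def traceMulLeft (S : Matrix n n ℝ) : Matrix n n ℝ →ₗ[ℝ] ℝ :=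
  (traceLinearMap n ℝ ℝ).comp (LinearMap.mulLeft ℝ S)

@[simp]
theorem traceMulLeft_apply (S X : Matrix n n ℝ) : traceMulLeft S X = (S * X).trace := rfl

theorem exists_separating_functional_of_not_exists_posDef [DecidableEq n]
    {S : ι → Matrix n n ℝ} (hS : ∀ i, (S i).IsSymm) {b : ι → ℝ}
    (h : ¬∃ X : Matrix n n ℝ, X.PosDef ∧ ∀ i, (S i * X).trace = b i) :
    ∃ (f : Matrix n n ℝ →L[ℝ] ℝ) (u : ℝ), 0 ≤ u ∧ f 1 < u ∧ (∀ X, X.PosSemidef → f X ≤ 0) ∧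
      ∀ X, (∀ i, (S i * X).trace = b i) → u ≤ f X := by
  set C := posDefQuadFormCone n
  set t := {X : Matrix n n ℝ | ∀ i, (S i * X).trace = b i}
  have ht : Convex ℝ t := by
    have : t = ⋂ i, {X | traceMulLeft (S i) X = b i} := by ext; simp [t]
    rw [this]
    exact convex_iInter fun i => convex_hyperplane (traceMulLeft (S i)).isLinear (b i)
  have hdisj : Disjoint (C : Set (Matrix n n ℝ)) t := by
    refine Set.disjoint_left.2 fun X hXC hXt => h ⟨_, posDef_of_mem_posDefQuadFormCone hXC,
      fun i => ?_⟩
    rw [Matrix.mul_smul, trace_smul, mul_add, trace_add, (hS i).trace_mul_transpose, hXt i,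
      smul_eq_mul]
    ring
  obtain ⟨f, u, hfC, hft⟩ := geometric_hahn_banach_open C.convex isOpen_posDefQuadFormCone ht hdisj
  have hclosed : ∀ c, IsClosed {X | f X ≤ c} := fun c => isClosed_le f.continuous continuous_const
  have hf_le_u : ∀ X ∈ closure (C : Set (Matrix n n ℝ)), f X ≤ u :=
    fun _ hX => closure_minimal (fun Y hY => (hfC Y hY).le) (hclosed u) hX
  have hf_nonpos : ∀ X ∈ closure (C : Set (Matrix n n ℝ)), f X ≤ 0 :=
    fun _ hX => closure_minimal (fun Y hY => C.le_zero_of_forall_lt f.toLinearMap hfC hY)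
      (hclosed 0) hX
  refine ⟨f, u, ?_, hfC 1 PosDef.one.mem_posDefQuadFormCone,
    fun X hX => hf_nonpos X hX.mem_closure_posDefQuadFormCone, hft⟩
  simpa using hf_le_u 0 PosSemidef.zero.mem_closure_posDefQuadFormCone

theorem exists_certificate_of_not_exists_posDef [Fintype ι] [DecidableEq n] {S : ι → Matrix n n ℝ}
    (hS : ∀ i, (S i).IsSymm) {b : ι → ℝ} {X₀ : Matrix n n ℝ} (hX₀ : X₀.PosSemidef)
    (hX₀b : ∀ i, (S i * X₀).trace = b i)
    (h : ¬∃ X : Matrix n n ℝ, X.PosDef ∧ ∀ i, (S i * X).trace = b i) :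
    ∃ y : ι → ℝ, (∑ i, y i • S i).PosSemidef ∧ (∑ i, y i • S i) ≠ 0 ∧ ∑ i, b i * y i = 0 := by
  obtain ⟨f, u, hu, hf1, hf_psd, hft⟩ := exists_separating_functional_of_not_exists_posDef hS h
  have hfX₀ : f X₀ = 0 := le_antisymm (hf_psd X₀ hX₀) (hu.trans (hft X₀ hX₀b))
  obtain ⟨c, hc⟩ := LinearMap.exists_eq_sum_smul_of_bddBelow_fiber (fun i => traceMulLeft (S i))
    f.toLinearMap X₀ (fun X hX => hft X fun i => by simpa [hX₀b] using hX i)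
  have hf : ∀ X, f X = -((∑ i, (-c i) • S i) * X).trace := fun X => by
    simpa [trace_sum_smul_mul] using LinearMap.congr_fun hc X
  refine ⟨fun i => -c i, posSemidef_iff_dotProduct_mulVec.2 ⟨?_, fun x => ?_⟩, fun hM => ?_, ?_⟩
  · simp [isHermitian_iff_isSymm, IsSymm, transpose_sum, (hS _).eq]
  · have := hf_psd _ (posSemidef_vecMulVec_self_star x)
    rw [hf, mul_vecMulVec, trace_vecMulVec, dotProduct_comm] at this
    simpa using this
  · rw [hf, hM, zero_mul, trace_zero, neg_zero] at hf1
    linarith [hft X₀ hX₀b]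
  · have := hf X₀
    rw [trace_sum_smul_mul, hfX₀] at this
    simpa [hX₀b, mul_comm] using this.symm

end Matrix

theorem stmt8 {n m : ℕ} (S : Fin m → Matrix (Fin n) (Fin n) ℝ)
    (hS : ∀ i, (S i).IsSymm) (b : Fin m → ℝ)
    (hne : {X : Matrix (Fin n) (Fin n) ℝ |
      X.PosSemidef ∧ ∀ i, (S i * X).trace = b i}.Nonempty) :
    Xor'
      (∃ X : Matrix (Fin n) (Fin n) ℝ, X.PosDef ∧ ∀ i, (S i * X).trace = b i)
      (∃ y : Fin m → ℝ, (∑ i, y i • S i).PosSemidef ∧ (∑ i, y i • S i) ≠ 0 ∧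
        ∑ i, b i * y i = 0) := by
  obtain ⟨X₀, hX₀, hX₀b⟩ := hne
  by_cases h : ∃ X : Matrix (Fin n) (Fin n) ℝ, X.PosDef ∧ ∀ i, (S i * X).trace = b i
  · obtain ⟨X, hX, hXb⟩ := h
    refine Or.inl ⟨⟨X, hX, hXb⟩, fun ⟨y, hy, hy0, hby⟩ => hy0 ?_⟩
    exact hy.eq_zero_of_trace_mul_posDef_eq_zero hX
      (by simp [trace_sum_smul_mul, hXb, mul_comm, hby])
  · exact Or.inr ⟨exists_certificate_of_not_exists_posDef hS hX₀ hX₀b h, h⟩
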